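/- Let p_s, p_e ≥ 0 with p_s + p_e ≤ 1 and let W be the substitution/erasure kernel. Let Y be a random variable taking finitely many values in lists over {0,1}, and let Y^(3) be a random variable taking values in lists over {0,1,★} with |Y^(3)| = |Y| pointwise, such that for every y with P(Y=y) > 0 and every y′ with |y′| = |y|, P(Y^(3)=y′ | Y=y) = ∏_{i=1}^{|y|} W(y_i, y′_i). Then H(Y^(3)) ≥ H(Y) − E[|Y|] · log₂((1−p_e)² + 2p_e²). -/

import Mathlib

open scoped BigOperators
open Classical

noncomputable section

/-- A finite probability space: a probability mass function on a finite type. -/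
structure FinProb (Ω : Type*) [Fintype Ω] where
  p : Ω → ℝ
  nonneg : ∀ ω, 0 ≤ p ω
  sum_one : ∑ ω, p ω = 1

variable {Ω : Type*} [Fintype Ω]

/-- Probability of an event. -/
def pr (μ : FinProb Ω) (E : Ω → Prop) : ℝ :=
  ∑ ω, if E ω then μ.p ω else 0

/-- Shannon entropy (base 2) of a random variable with finitely many values. -/
def entropy {S : Type*} (μ : FinProb Ω) (U : Ω → S) : ℝ :=
  -∑ u ∈ Finset.univ.image U,
    pr μ (fun ω => U ω = u) * Real.logb 2 (pr μ (fun ω => U ω = u))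

/-- Conditional Shannon entropy `H(U | V)`. -/
def condEntropy {S T : Type*} (μ : FinProb Ω) (U : Ω → S) (V : Ω → T) : ℝ :=
  ∑ v ∈ (Finset.univ.image V).filter (fun v => 0 < pr μ (fun ω => V ω = v)),
    pr μ (fun ω => V ω = v) *
      (-∑ u ∈ Finset.univ.image U,
        (pr μ (fun ω => U ω = u ∧ V ω = v) / pr μ (fun ω => V ω = v)) *
          Real.logb 2 (pr μ (fun ω => U ω = u ∧ V ω = v) / pr μ (fun ω => V ω = v)))

/-- Mutual information `I(U;V) = H(U) - H(U|V)`. -/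
def mutualInfo {S T : Type*} (μ : FinProb Ω) (U : Ω → S) (V : Ω → T) : ℝ :=
  entropy μ U - condEntropy μ U V

/-- Expected length of a list-valued random variable. -/
def expLen {A : Type*} (μ : FinProb Ω) (Y : Ω → List A) : ℝ :=
  ∑ ω, μ.p ω * (Y ω).length

/-- The substitution/erasure kernel on input alphabet `{0,1}` (modeled as `Bool`)
and output alphabet `{0,1,★}` (modeled as `Option Bool`, with `none` the erasure `★`):
`W b b = 1 - ps - pe`, `W b (1-b) = ps`, `W b ★ = pe`. -/
def subErsKernel (ps pe : ℝ) : Bool → Option Bool → ℝ :=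
  fun b c => match c with
  | none => pe
  | some c' => if c' = b then 1 - ps - pe else ps

/-! Both steps are Gibbs inequalities `∑ μ log₂ r ≤ 0` for `r` with `∑ μ r ≤ 1`, which follow
from `log r ≤ r - 1`. Let `S(z) = ∏ s(zᵢ)` be the column sums of the product kernel, where
`s(★) = 2pe` and `s(b) = 1 - pe`. Comparing the joint law of `(Y, Y⁽³⁾)` with
`q(z) W(z|y) / S(z)` gives `H(Y) ≤ H(Y⁽³⁾) + E[log₂ S(Y⁽³⁾)]`. Whatever the input letter, the
output letter has `E[s] = (1 - pe)² + 2pe² = K`, so `E[S(Y⁽³⁾) | Y = y] = K^|y|`, and comparing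
the joint law with `p(y) W(z|y) S(z) / K^|y|` gives `E[log₂ S(Y⁽³⁾)] ≤ E|Y| log₂ K`. -/

open Finset Real

section FinProb

variable (μ : FinProb Ω)

lemma pr_nonneg (E : Ω → Prop) : 0 ≤ pr μ E :=
  sum_nonneg fun ω _ => by split_ifs <;> simp [μ.nonneg ω]

lemma pr_mono {E F : Ω → Prop} (h : ∀ ω, E ω → F ω) : pr μ E ≤ pr μ F :=
  sum_le_sum fun ω _ => by
    by_cases hE : E ω
    · simp [hE, h ω hE]
    · by_cases hF : F ω <;> simp [hE, hF, μ.nonneg ω]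

lemma le_pr {E : Ω → Prop} {ω : Ω} (h : E ω) : μ.p ω ≤ pr μ E :=
  (if_pos h).symm.trans_le <| single_le_sum (f := fun ω => if E ω then μ.p ω else 0)
    (fun ω _ => by split_ifs <;> simp [μ.nonneg]) (mem_univ ω)

lemma sum_pr_and_mul {S : Type*} (X : Ω → S) (E : Ω → Prop) (h : S → ℝ) :
    ∑ x ∈ univ.image X, pr μ (fun ω => E ω ∧ X ω = x) * h x
      = ∑ ω, if E ω then μ.p ω * h (X ω) else 0 := by
  simp only [pr, sum_mul]
  rw [sum_comm]
  refine sum_congr rfl fun ω _ => ?_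
  by_cases hE : E ω <;> simp [hE]

lemma sum_pr_mul {S : Type*} (X : Ω → S) (h : S → ℝ) :
    ∑ x ∈ univ.image X, pr μ (fun ω => X ω = x) * h x = ∑ ω, μ.p ω * h (X ω) := by
  simpa using sum_pr_and_mul μ X (fun _ => True) h

lemma sum_sum_pr_and_mul {S T : Type*} (X : Ω → S) (Z : Ω → T) (F : T → S → ℝ) :
    ∑ z ∈ univ.image Z, ∑ x ∈ univ.image X, pr μ (fun ω => Z ω = z ∧ X ω = x) * F z x
      = ∑ ω, μ.p ω * F (Z ω) (X ω) := by
  simp only [sum_pr_and_mul]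
  rw [sum_comm]
  simp

lemma entropy_eq_sum {S : Type*} (X : Ω → S) :
    entropy μ X = -∑ ω, μ.p ω * logb 2 (pr μ (fun ω' => X ω' = X ω)) := by
  rw [entropy, sum_pr_mul μ X (fun x => logb 2 (pr μ fun ω => X ω = x))]

lemma sum_mul_logb_nonpos (r : Ω → ℝ) (hr : ∀ ω, 0 < μ.p ω → 0 < r ω)
    (hsum : ∑ ω, μ.p ω * r ω ≤ 1) : ∑ ω, μ.p ω * logb 2 (r ω) ≤ 0 := by
  have hlog2 : 0 < log 2 := log_pos one_lt_two
  have hpoint : ∀ ω, μ.p ω * logb 2 (r ω) ≤ μ.p ω * (r ω - 1) / log 2 := fun ω => by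
    rcases (μ.nonneg ω).eq_or_lt with h0 | hpos
    · simp [← h0]
    · rw [logb, mul_div_assoc]
      exact mul_le_mul_of_nonneg_left
        (div_le_div_of_nonneg_right (log_le_sub_one_of_pos (hr ω hpos)) hlog2.le) hpos.le
  calc ∑ ω, μ.p ω * logb 2 (r ω) ≤ ∑ ω, μ.p ω * (r ω - 1) / log 2 :=
        sum_le_sum fun ω _ => hpoint ω
    _ = (∑ ω, μ.p ω * r ω - 1) / log 2 := by
      simp only [← sum_div, mul_sub, mul_one, sum_sub_distrib, μ.sum_one]
    _ ≤ 0 := div_nonpos_of_nonpos_of_nonneg (by linarith) hlog2.le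

section Channel

variable {S T : Type*} (X : Ω → S) (Z : Ω → T)

lemma pos_of_sum_pr_div_le {c : T → ℝ}
    (hc : ∀ z, ∑ x ∈ univ.image X,
      pr μ (fun ω => Z ω = z ∧ X ω = x) / pr μ (fun ω => X ω = x) ≤ c z)
    {ω : Ω} (hω : 0 < μ.p ω) : 0 < c (Z ω) := by
  set ratio : S → ℝ := fun x =>
    pr μ (fun ω' => Z ω' = Z ω ∧ X ω' = x) / pr μ (fun ω' => X ω' = x)
  have hterm : 0 < ratio (X ω) :=
    div_pos (hω.trans_le (le_pr μ ⟨rfl, rfl⟩)) (hω.trans_le (le_pr μ rfl))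
  refine hterm.trans_le (le_trans ?_ (hc (Z ω)))
  exact single_le_sum (f := ratio) (fun x _ => div_nonneg (pr_nonneg μ _) (pr_nonneg μ _))
    (mem_image_of_mem X (mem_univ ω))

theorem entropy_le_entropy_add_sum_logb {c : T → ℝ}
    (hc : ∀ z, ∑ x ∈ univ.image X,
      pr μ (fun ω => Z ω = z ∧ X ω = x) / pr μ (fun ω => X ω = x) ≤ c z) :
    entropy μ X ≤ entropy μ Z + ∑ ω, μ.p ω * logb 2 (c (Z ω)) := by
  set p : S → ℝ := fun x => pr μ (fun ω => X ω = x)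
  set q : T → ℝ := fun z => pr μ (fun ω => Z ω = z)
  have hc_nonneg : ∀ z, 0 ≤ c z := fun z =>
    (sum_nonneg fun x _ => div_nonneg (pr_nonneg μ _) (pr_nonneg μ _)).trans (hc z)
  have hsplit : ∀ ω, μ.p ω * logb 2 (q (Z ω) / (p (X ω) * c (Z ω))) = μ.p ω * logb 2 (q (Z ω))
      - μ.p ω * logb 2 (p (X ω)) - μ.p ω * logb 2 (c (Z ω)) := fun ω => by
    rcases (μ.nonneg ω).eq_or_lt with h0 | hω
    · simp [← h0]
    · have hp : 0 < p (X ω) := hω.trans_le (le_pr μ rfl)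
      have hq : 0 < q (Z ω) := hω.trans_le (le_pr μ rfl)
      have hcω := pos_of_sum_pr_div_le μ X Z hc hω
      rw [logb_div hq.ne' (mul_pos hp hcω).ne', logb_mul hp.ne' hcω.ne']
      ring
  have hmass : ∑ ω, μ.p ω * (q (Z ω) / (p (X ω) * c (Z ω))) ≤ 1 := by
    rw [← sum_sum_pr_and_mul μ X Z (fun z x => q z / (p x * c z))]
    calc ∑ z ∈ univ.image Z, ∑ x ∈ univ.image X,
          pr μ (fun ω => Z ω = z ∧ X ω = x) * (q z / (p x * c z))
        = ∑ z ∈ univ.image Z, q z / c z *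
            ∑ x ∈ univ.image X, pr μ (fun ω => Z ω = z ∧ X ω = x) / p x := by
          simp only [mul_sum]; congr! 2 with z _ x _; ring
      _ ≤ ∑ z ∈ univ.image Z, q z / c z * c z := sum_le_sum fun z _ =>
          mul_le_mul_of_nonneg_left (hc z) (div_nonneg (pr_nonneg μ _) (hc_nonneg z))
      _ ≤ ∑ z ∈ univ.image Z, q z * 1 := sum_le_sum fun z _ => by
          rcases (hc_nonneg z).eq_or_lt with h0 | hpos
          · simpa [← h0] using pr_nonneg μ _
          · rw [div_mul_cancel₀ _ hpos.ne', mul_one]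
      _ = 1 := by rw [sum_pr_mul μ Z fun _ => 1]; simp [μ.sum_one]
  have hgibbs := sum_mul_logb_nonpos μ (fun ω => q (Z ω) / (p (X ω) * c (Z ω)))
    (fun ω hω => div_pos (hω.trans_le (le_pr μ rfl))
    (mul_pos (hω.trans_le (le_pr μ rfl)) (pos_of_sum_pr_div_le μ X Z hc hω))) hmass
  simp only [hsplit, sum_sub_distrib] at hgibbs
  rw [entropy_eq_sum, entropy_eq_sum]
  linarith

theorem sum_mul_logb_le_sum_mul_logb {c : T → ℝ} {d : S → ℝ}
    (hc : ∀ ω, 0 < μ.p ω → 0 < c (Z ω)) (hd_pos : ∀ x, 0 < d x)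
    (hd : ∀ x, ∑ z ∈ univ.image Z, pr μ (fun ω => Z ω = z ∧ X ω = x) * c z
      ≤ pr μ (fun ω => X ω = x) * d x) :
    ∑ ω, μ.p ω * logb 2 (c (Z ω)) ≤ ∑ ω, μ.p ω * logb 2 (d (X ω)) := by
  have hsplit : ∀ ω, μ.p ω * logb 2 (c (Z ω) / d (X ω))
      = μ.p ω * logb 2 (c (Z ω)) - μ.p ω * logb 2 (d (X ω)) := fun ω => by
    rcases (μ.nonneg ω).eq_or_lt with h0 | hω
    · simp [← h0]
    · rw [logb_div (hc ω hω).ne' (hd_pos _).ne', mul_sub]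
  have hmass : ∑ ω, μ.p ω * (c (Z ω) / d (X ω)) ≤ 1 := by
    rw [← sum_sum_pr_and_mul μ X Z (fun z x => c z / d x), sum_comm]
    calc ∑ x ∈ univ.image X, ∑ z ∈ univ.image Z,
          pr μ (fun ω => Z ω = z ∧ X ω = x) * (c z / d x)
        = ∑ x ∈ univ.image X,
            (∑ z ∈ univ.image Z, pr μ (fun ω => Z ω = z ∧ X ω = x) * c z) / d x := by
          simp only [sum_div, mul_div_assoc]
      _ ≤ ∑ x ∈ univ.image X, pr μ (fun ω => X ω = x) * 1 := sum_le_sum fun x _ => by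
          rw [div_le_iff₀ (hd_pos x), mul_one]; exact hd x
      _ = 1 := by rw [sum_pr_mul μ X fun _ => 1]; simp [μ.sum_one]
  have hgibbs := sum_mul_logb_nonpos μ _ (fun ω hω => div_pos (hc ω hω) (hd_pos _)) hmass
  simp only [hsplit, sum_sub_distrib] at hgibbs
  linarith

end Channel

end FinProb

lemma sum_le_sum_ofFn {α : Type*} [Fintype α] (A : Finset (List α)) (n : ℕ)
    {φ : List α → ℝ} (hφ : ∀ l, 0 ≤ φ l) (hsupp : ∀ l, l.length ≠ n → φ l = 0) :
    ∑ l ∈ A, φ l ≤ ∑ f : Fin n → α, φ (List.ofFn f) :=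
  calc ∑ l ∈ A, φ l = ∑ l ∈ A with l.length = n, φ l :=
        (sum_filter_of_ne fun l _ h => not_not.mp (mt (hsupp l) h)).symm
    _ ≤ ∑ l ∈ univ.image (List.ofFn (n := n)), φ l := by
        refine sum_le_sum_of_subset_of_nonneg (fun l hl => ?_) fun l _ _ => hφ l
        obtain ⟨-, rfl⟩ := mem_filter.mp hl
        exact mem_image.mpr ⟨l.get, mem_univ _, List.ofFn_get l⟩
    _ = ∑ f : Fin n → α, φ (List.ofFn f) := sum_image fun f _ g _ h => List.ofFn_injective h

def subErsColSum (pe : ℝ) : Option Bool → ℝ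
  | none => 2 * pe
  | some _ => 1 - pe

section SubErsKernel

variable {ps pe : ℝ}

lemma subErsKernel_nonneg (hps : 0 ≤ ps) (hpe : 0 ≤ pe) (hspe : ps + pe ≤ 1)
    (b : Bool) (c : Option Bool) : 0 ≤ subErsKernel ps pe b c := by
  rcases c with _ | c <;> simp only [subErsKernel]
  · exact hpe
  · split_ifs <;> linarith

lemma subErsColSum_nonneg (hpe : 0 ≤ pe) (hpe1 : pe ≤ 1) (c : Option Bool) :
    0 ≤ subErsColSum pe c := by
  cases c <;> simp only [subErsColSum] <;> linarith

lemma sum_subErsKernel_left (c : Option Bool) :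
    ∑ b, subErsKernel ps pe b c = subErsColSum pe c := by
  rcases c with _ | _ | _ <;> simp [subErsKernel, subErsColSum] <;> ring

lemma sum_subErsKernel_mul_subErsColSum (b : Bool) :
    ∑ c, subErsKernel ps pe b c * subErsColSum pe c = (1 - pe) ^ 2 + 2 * pe ^ 2 := by
  rw [Fintype.sum_option]
  cases b <;> simp [subErsKernel, subErsColSum] <;> ring

lemma sum_prod_subErsKernel_left {n : ℕ} (g : Fin n → Option Bool) :
    ∑ f : Fin n → Bool, ∏ i, subErsKernel ps pe (f i) (g i)
      = ∏ i, subErsColSum pe (g i) := by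
  rw [← Fintype.prod_sum (fun i b => subErsKernel ps pe b (g i))]
  simp only [sum_subErsKernel_left]

lemma sum_prod_subErsKernel_mul_subErsColSum {n : ℕ} (f : Fin n → Bool) :
    ∑ g : Fin n → Option Bool,
        (∏ i, subErsKernel ps pe (f i) (g i)) * ∏ i, subErsColSum pe (g i)
      = ((1 - pe) ^ 2 + 2 * pe ^ 2) ^ n := by
  simp only [← prod_mul_distrib]
  rw [← Fintype.prod_sum (fun i c => subErsKernel ps pe (f i) c * subErsColSum pe c)]
  simp only [sum_subErsKernel_mul_subErsColSum, prod_const, card_univ, Fintype.card_fin]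

end SubErsKernel

section SubErsChannel

variable (μ : FinProb Ω) {ps pe : ℝ} {Y : Ω → List Bool} {Y3 : Ω → List (Option Bool)}

lemma pr_and_eq_zero_of_length_ne (hlen : ∀ ω, (Y3 ω).length = (Y ω).length)
    {y : List Bool} {z : List (Option Bool)} (h : y.length ≠ z.length) :
    pr μ (fun ω => Y3 ω = z ∧ Y ω = y) = 0 :=
  sum_eq_zero fun ω _ => if_neg fun ⟨h3, hY⟩ => h (by rw [← h3, ← hY, hlen])

lemma pr_ofFn_and_eq_mul_prod
    (hcond : ∀ (n : ℕ) (y : Fin n → Bool) (y' : Fin n → Option Bool),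
      0 < pr μ (fun ω => Y ω = List.ofFn y) →
      pr μ (fun ω => Y3 ω = List.ofFn y' ∧ Y ω = List.ofFn y) /
        pr μ (fun ω => Y ω = List.ofFn y) = ∏ i, subErsKernel ps pe (y i) (y' i))
    (n : ℕ) (f : Fin n → Bool) (g : Fin n → Option Bool) :
    pr μ (fun ω => Y3 ω = List.ofFn g ∧ Y ω = List.ofFn f)
      = pr μ (fun ω => Y ω = List.ofFn f) * ∏ i, subErsKernel ps pe (f i) (g i) := by
  rcases (pr_nonneg μ (fun ω => Y ω = List.ofFn f)).eq_or_lt with h0 | hpos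
  · rw [← h0, zero_mul]
    exact le_antisymm ((pr_mono μ fun _ h => h.2).trans_eq h0.symm) (pr_nonneg μ _)
  · rw [← hcond n f g hpos, mul_div_cancel₀ _ hpos.ne']

lemma sum_pr_and_div_le_prod_subErsColSum (hps : 0 ≤ ps) (hpe : 0 ≤ pe) (hspe : ps + pe ≤ 1)
    (hlen : ∀ ω, (Y3 ω).length = (Y ω).length)
    (hjoint : ∀ (n : ℕ) (f : Fin n → Bool) (g : Fin n → Option Bool),
      pr μ (fun ω => Y3 ω = List.ofFn g ∧ Y ω = List.ofFn f)
        = pr μ (fun ω => Y ω = List.ofFn f) * ∏ i, subErsKernel ps pe (f i) (g i))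
    (A : Finset (List Bool)) (z : List (Option Bool)) :
    ∑ y ∈ A, pr μ (fun ω => Y3 ω = z ∧ Y ω = y) / pr μ (fun ω => Y ω = y)
      ≤ (z.map (subErsColSum pe)).prod := by
  obtain ⟨n, g, rfl⟩ : ∃ n, ∃ g : Fin n → Option Bool, z = List.ofFn g :=
    ⟨_, _, (List.ofFn_get z).symm⟩
  calc ∑ y ∈ A, pr μ (fun ω => Y3 ω = List.ofFn g ∧ Y ω = y) / pr μ (fun ω => Y ω = y)
      ≤ ∑ f : Fin n → Bool, pr μ (fun ω => Y3 ω = List.ofFn g ∧ Y ω = List.ofFn f)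
          / pr μ (fun ω => Y ω = List.ofFn f) :=
        sum_le_sum_ofFn A n (fun y => div_nonneg (pr_nonneg μ _) (pr_nonneg μ _)) fun y hy => by
          rw [pr_and_eq_zero_of_length_ne μ hlen (by simpa using hy), zero_div]
    _ ≤ ∑ f : Fin n → Bool, ∏ i, subErsKernel ps pe (f i) (g i) := sum_le_sum fun f _ => by
        rw [hjoint]
        rcases (pr_nonneg μ (fun ω => Y ω = List.ofFn f)).eq_or_lt with h0 | hpos
        · rw [← h0, zero_mul, zero_div]
          exact prod_nonneg fun i _ => subErsKernel_nonneg hps hpe hspe _ _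
        · rw [mul_div_cancel_left₀ _ hpos.ne']
    _ = ((List.ofFn g).map (subErsColSum pe)).prod := by
        rw [sum_prod_subErsKernel_left, List.map_ofFn, List.prod_ofFn]
        rfl

lemma sum_pr_and_mul_prod_subErsColSum_le (hpe : 0 ≤ pe) (hpe1 : pe ≤ 1)
    (hlen : ∀ ω, (Y3 ω).length = (Y ω).length)
    (hjoint : ∀ (n : ℕ) (f : Fin n → Bool) (g : Fin n → Option Bool),
      pr μ (fun ω => Y3 ω = List.ofFn g ∧ Y ω = List.ofFn f)
        = pr μ (fun ω => Y ω = List.ofFn f) * ∏ i, subErsKernel ps pe (f i) (g i))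
    (B : Finset (List (Option Bool))) (y : List Bool) :
    ∑ z ∈ B, pr μ (fun ω => Y3 ω = z ∧ Y ω = y) * (z.map (subErsColSum pe)).prod
      ≤ pr μ (fun ω => Y ω = y) * ((1 - pe) ^ 2 + 2 * pe ^ 2) ^ y.length := by
  obtain ⟨n, f, rfl⟩ : ∃ n, ∃ f : Fin n → Bool, y = List.ofFn f :=
    ⟨_, _, (List.ofFn_get y).symm⟩
  have hcol : ∀ z : List (Option Bool), 0 ≤ (z.map (subErsColSum pe)).prod := fun z =>
    List.prod_nonneg fun a ha => by
      obtain ⟨c, -, rfl⟩ := List.mem_map.mp ha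
      exact subErsColSum_nonneg hpe hpe1 c
  calc ∑ z ∈ B, pr μ (fun ω => Y3 ω = z ∧ Y ω = List.ofFn f) * (z.map (subErsColSum pe)).prod
      ≤ ∑ g : Fin n → Option Bool,
          pr μ (fun ω => Y3 ω = List.ofFn g ∧ Y ω = List.ofFn f)
            * ((List.ofFn g).map (subErsColSum pe)).prod :=
        sum_le_sum_ofFn B n (fun z => mul_nonneg (pr_nonneg μ _) (hcol z)) fun z hz => by
          rw [pr_and_eq_zero_of_length_ne μ hlen (by simpa using Ne.symm hz), zero_mul]
    _ = _ := by
        simp only [hjoint, List.map_ofFn, List.prod_ofFn, Function.comp_apply, mul_assoc,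
          ← mul_sum, sum_prod_subErsKernel_mul_subErsColSum, List.length_ofFn]

end SubErsChannel

/-- for the substitution/erasure kernel,
`H(Y⁽³⁾) ≥ H(Y) − E[|Y|]·log₂((1−pe)² + 2pe²)`. -/
theorem stmt9 {Ω : Type*} [Fintype Ω] (μ : FinProb Ω)
    (ps pe : ℝ) (hps : 0 ≤ ps) (hpe : 0 ≤ pe) (hspe : ps + pe ≤ 1)
    (Y : Ω → List Bool) (Y3 : Ω → List (Option Bool))
    (hlen : ∀ ω, (Y3 ω).length = (Y ω).length)
    (hcond : ∀ (n : ℕ) (y : Fin n → Bool) (y' : Fin n → Option Bool),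
      0 < pr μ (fun ω => Y ω = List.ofFn y) →
      pr μ (fun ω => Y3 ω = List.ofFn y' ∧ Y ω = List.ofFn y) /
        pr μ (fun ω => Y ω = List.ofFn y) = ∏ i, subErsKernel ps pe (y i) (y' i)) :
    entropy μ Y3 ≥ entropy μ Y - expLen μ Y * Real.logb 2 ((1 - pe) ^ 2 + 2 * pe ^ 2) := by
  have hK : 0 < (1 - pe) ^ 2 + 2 * pe ^ 2 := by nlinarith [sq_nonneg (3 * pe - 1)]
  have hjoint := pr_ofFn_and_eq_mul_prod μ hcond
  have hcol := sum_pr_and_div_le_prod_subErsColSum μ hps hpe hspe hlen hjoint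
  have hentropy := entropy_le_entropy_add_sum_logb μ Y Y3 (hcol _)
  have hlog := sum_mul_logb_le_sum_mul_logb μ Y Y3
    (fun ω hω => pos_of_sum_pr_div_le μ Y Y3 (hcol _) hω) (fun y => pow_pos hK y.length)
    (sum_pr_and_mul_prod_subErsColSum_le μ hpe (by linarith) hlen hjoint _)
  have hexpLen : ∑ ω, μ.p ω * logb 2 (((1 - pe) ^ 2 + 2 * pe ^ 2) ^ (Y ω).length)
      = expLen μ Y * logb 2 ((1 - pe) ^ 2 + 2 * pe ^ 2) := by
    simp only [logb_pow, expLen, sum_mul, mul_assoc]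
  linarith

end
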